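/- arXiv:1705.03699 — 2 statements merged into one kernel-verified Lean document; each statement's English description precedes it below -/
import Mathlib

section
/- Let (X,d) be a metric space and T a self-mapping of X satisfying: (1) there exists a function ψ : (0,∞) → (0,∞) with ψ(t) < t for each t > 0 such that d(Tx,Ty) ≤ ψ(M₁(x,y)) for all x,y ∈ X with M₁(x,y) > 0; and (2) for every ε > 0 there exists δ > 0 such that for all x,y ∈ X, ε < M₁(x,y) < ε + δ implies d(Tx,Ty) ≤ ε. Let x₀ ∈ X and define the Picard sequence x_{n+1} = Tx_n. Then the sequence of distances u_n = d(x_n, x_{n+1}) is nonincreasing and converges to 0, and {x_n} is a Cauchy sequence in X. -/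
/-- The number `M₁(x,y)` associated to a self-mapping `T` of a metric space. -/
noncomputable def M1 {X : Type*} [MetricSpace X] (T : X → X) (x y : X) : ℝ :=
  max (max (max (dist x y) (dist x (T x)))
      (max (dist y (T y)) (dist x (T x) * dist y (T y) / (1 + dist x y))))
    (dist x (T x) * dist y (T y) / (1 + dist (T x) (T y)))

private lemma aux_div (a b : ℝ) (ha : 0 ≤ a) (hb : 0 ≤ b) : a * b / (1 + a) ≤ b := by
  rw [div_le_iff₀ (by linarith : (0:ℝ) < 1 + a)]
  nlinarith

private lemma dist_le_M1 {X : Type*} [MetricSpace X] (T : X → X) (x y : X) :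
    dist x y ≤ M1 T x y :=
  le_max_of_le_left (le_max_of_le_left (le_max_left _ _))

private lemma M1_succ {X : Type*} [MetricSpace X] (T : X → X) (a : X) :
    M1 T a (T a) = max (dist a (T a)) (dist (T a) (T (T a))) := by
  have hp : (0:ℝ) ≤ dist a (T a) := dist_nonneg
  have hq : (0:ℝ) ≤ dist (T a) (T (T a)) := dist_nonneg
  simp only [M1]
  apply le_antisymm
  · apply max_le
    · apply max_le
      · exact max_le (le_max_left _ _) (le_max_left _ _)
      · apply max_le (le_max_right _ _)
        exact (aux_div _ _ hp hq).trans (le_max_right _ _)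
    · have : dist a (T a) * dist (T a) (T (T a)) / (1 + dist (T a) (T (T a))) ≤
          dist a (T a) := by
        rw [mul_comm]; exact aux_div _ _ hq hp
      exact this.trans (le_max_left _ _)
  · apply max_le
    · exact le_max_of_le_left (le_max_of_le_left (le_max_left _ _))
    · exact le_max_of_le_left (le_max_of_le_right (le_max_left _ _))

private lemma M1_le_max3 {X : Type*} [MetricSpace X] (T : X → X) (x y : X)
    (h : dist y (T y) ≤ 1) :
    M1 T x y ≤ max (max (dist x y) (dist x (T x))) (dist y (T y)) := by
  have hd : (0:ℝ) ≤ dist x y := dist_nonneg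
  have hd' : (0:ℝ) ≤ dist (T x) (T y) := dist_nonneg
  have hprod : dist x (T x) * dist y (T y) ≤ dist x (T x) :=
    mul_le_of_le_one_right dist_nonneg h
  have h4 : dist x (T x) * dist y (T y) / (1 + dist x y) ≤ dist x (T x) :=
    le_trans (div_le_self (by positivity) (by linarith)) hprod
  have h5 : dist x (T x) * dist y (T y) / (1 + dist (T x) (T y)) ≤ dist x (T x) :=
    le_trans (div_le_self (by positivity) (by linarith)) hprod
  simp only [M1]
  apply max_le
  · apply max_le
    · exact max_le (le_max_of_le_left (le_max_left _ _))
        (le_max_of_le_left (le_max_right _ _))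
    · exact max_le (le_max_right _ _) (h4.trans (le_max_of_le_left (le_max_right _ _)))
  · exact h5.trans (le_max_of_le_left (le_max_right _ _))

theorem stmt_11 {X : Type*} [MetricSpace X] (T : X → X)
    (ψ : ℝ → ℝ) (hψ : ∀ t > (0 : ℝ), 0 < ψ t ∧ ψ t < t)
    (h1 : ∀ x y : X, 0 < M1 T x y → dist (T x) (T y) ≤ ψ (M1 T x y))
    (h2 : ∀ ε > (0 : ℝ), ∃ δ > (0 : ℝ), ∀ x y : X,
      ε < M1 T x y → M1 T x y < ε + δ → dist (T x) (T y) ≤ ε)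
    (x₀ : X) :
    (∀ n : ℕ, dist (T^[n + 1] x₀) (T^[n + 2] x₀) ≤ dist (T^[n] x₀) (T^[n + 1] x₀)) ∧
    Filter.Tendsto (fun n : ℕ => dist (T^[n] x₀) (T^[n + 1] x₀)) Filter.atTop (nhds 0) ∧
    CauchySeq (fun n : ℕ => T^[n] x₀) := by
  let x : ℕ → X := fun n => T^[n] x₀
  have hTx : ∀ n, T (x n) = x (n+1) := fun n => (Function.iterate_succ_apply' T n x₀).symm
  let u : ℕ → ℝ := fun n => dist (x n) (x (n+1))
  have hu0 : ∀ n, 0 ≤ u n := fun n => dist_nonneg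
  -- M1 of consecutive points
  have hM1c : ∀ n, M1 T (x n) (x (n+1)) = max (u n) (u (n+1)) := by
    intro n
    have := M1_succ T (x n)
    rw [hTx n] at this
    rw [this, hTx (n+1)]
  -- monotonicity
  have hmono : ∀ n, u (n+1) ≤ u n := by
    intro n
    rcases le_or_gt (u (n+1)) (u n) with h | h
    · exact h
    · exfalso
      have hMpos : 0 < M1 T (x n) (x (n+1)) := by
        rw [hM1c n, max_eq_right h.le]
        exact lt_of_le_of_lt (hu0 n) h
      have hkey := h1 (x n) (x (n+1)) hMpos
      rw [hTx n, hTx (n+1), hM1c n, max_eq_right h.le] at hkey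
      have hMpos' : 0 < u (n+1) := lt_of_le_of_lt (hu0 n) h
      have hlt := (hψ _ hMpos').2
      linarith
  have hanti : Antitone u := antitone_nat_of_succ_le hmono
  have hbdd : BddBelow (Set.range u) := ⟨0, by rintro _ ⟨n, rfl⟩; exact hu0 n⟩
  have htend : Filter.Tendsto u Filter.atTop (nhds (⨅ n, u n)) :=
    tendsto_atTop_ciInf hanti hbdd
  have hinf_le : ∀ n, (⨅ n, u n) ≤ u n := fun n => ciInf_le hbdd n
  -- if u n equals the infimum r > 0, contradiction
  have hr0 : 0 ≤ ⨅ n, u n := le_ciInf hu0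
  have hno : ∀ r : ℝ, r = (⨅ n, u n) → 0 < r → ∀ n, u n = r → False := by
    intro r hrdef hr n hn
    have h1' : u (n+1) ≤ r := hn ▸ hmono n
    have h2' : r ≤ u (n+1) := hrdef ▸ hinf_le (n+1)
    have hun1 : u (n+1) = r := le_antisymm h1' h2'
    have hM : M1 T (x n) (x (n+1)) = r := by rw [hM1c n, hn, hun1, max_self]
    have hMpos : 0 < M1 T (x n) (x (n+1)) := hM ▸ hr
    have hkey := h1 (x n) (x (n+1)) hMpos
    rw [hTx n, hTx (n+1)] at hkey
    rw [hM] at hkey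
    have := (hψ r hr).2
    linarith [hun1 ▸ hkey]
  have hrzero : (⨅ n, u n) = 0 := by
    by_contra hne
    have hr : 0 < ⨅ n, u n := lt_of_le_of_ne hr0 (Ne.symm hne)
    obtain ⟨δ, hδ, hδ2⟩ := h2 _ hr
    obtain ⟨N, hN⟩ := exists_lt_of_ciInf_lt (show (⨅ n, u n) < (⨅ n, u n) + δ by linarith)
    have hNne : u N ≠ (⨅ n, u n) := fun h => hno _ rfl hr N h
    have hNgt : (⨅ n, u n) < u N := lt_of_le_of_ne (hinf_le N) (Ne.symm hNne)
    have hM : M1 T (x N) (x (N+1)) = u N := by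
      rw [hM1c N, max_eq_left (hmono N)]
    have := hδ2 (x N) (x (N+1)) (hM ▸ hNgt) (hM ▸ hN)
    rw [hTx N, hTx (N+1)] at this
    have hun1 : u (N+1) = ⨅ n, u n := le_antisymm this (hinf_le (N+1))
    exact hno _ rfl hr (N+1) hun1
  have htend0 : Filter.Tendsto u Filter.atTop (nhds 0) := hrzero ▸ htend
  refine ⟨hmono, htend0, ?_⟩
  -- Cauchy
  rw [Metric.cauchySeq_iff']
  intro ε hε
  set ε₁ := ε / 3 with hε₁def
  have hε₁ : 0 < ε₁ := by positivity
  obtain ⟨δ, hδ, hδ2⟩ := h2 ε₁ hε₁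
  set δ' := min δ (min ε₁ 1) with hδ'def
  have hδ'pos : 0 < δ' := lt_min hδ (lt_min hε₁ one_pos)
  have hδ'le : δ' ≤ δ := min_le_left _ _
  have hδ'le1 : δ' ≤ 1 := (min_le_right _ _).trans (min_le_right _ _)
  have hδ'leε : δ' ≤ ε₁ := (min_le_right _ _).trans (min_le_left _ _)
  obtain ⟨N, hN⟩ := (Metric.tendsto_atTop.mp htend0) (δ'/3) (by positivity)
  have hNu : ∀ n, N ≤ n → u n < δ'/3 := by
    intro n hn
    have := hN n hn
    rw [Real.dist_eq, sub_zero, abs_of_nonneg (hu0 n)] at this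
    exact this
  have claim : ∀ k : ℕ, dist (x N) (x (N + k)) < ε₁ + δ' := by
    intro k
    induction k with
    | zero => simpa using by positivity
    | succ k ih =>
      have hkey : dist (x (N+1)) (x (N+k+1)) ≤ ε₁ := by
        rw [← hTx N, ← hTx (N+k)]
        by_cases hM : 0 < M1 T (x N) (x (N+k))
        · by_cases hMε : M1 T (x N) (x (N+k)) ≤ ε₁
          · exact le_trans (h1 _ _ hM) (le_trans (hψ _ hM).2.le hMε)
          · push_neg at hMε
            apply hδ2 (x N) (x (N+k)) hMε
            have huN : u N < δ'/3 := hNu N le_rfl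
            have huNk : u (N+k) < δ'/3 := hNu (N+k) (Nat.le_add_right _ _)
            have hle1 : dist (x (N+k)) (T (x (N+k))) ≤ 1 := by
              rw [hTx (N+k)]
              have : u (N+k) ≤ δ'/3 := huNk.le
              linarith
            have hb := M1_le_max3 T (x N) (x (N+k)) hle1
            rw [hTx N, hTx (N+k)] at hb
            have : M1 T (x N) (x (N+k)) < ε₁ + δ' := by
              apply lt_of_le_of_lt hb
              apply max_lt (max_lt ih ?_) ?_
              · show u N < ε₁ + δ'; linarith
              · show u (N+k) < ε₁ + δ'; linarith
            linarith
        · push_neg at hM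
          have hxy : dist (x N) (x (N+k)) = 0 :=
            le_antisymm (le_trans (dist_le_M1 T _ _) hM) dist_nonneg
          have : x N = x (N+k) := by rwa [dist_eq_zero] at hxy
          rw [this, dist_self]
          exact hε₁.le
      have huN : u N < δ'/3 := hNu N le_rfl
      calc dist (x N) (x (N + (k+1)))
          ≤ dist (x N) (x (N+1)) + dist (x (N+1)) (x (N+k+1)) := dist_triangle _ _ _
        _ ≤ u N + ε₁ := add_le_add le_rfl hkey
        _ < ε₁ + δ' := by linarith
  refine ⟨N, fun n hn => ?_⟩
  obtain ⟨k, rfl⟩ := Nat.exists_eq_add_of_le hn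
  have := claim k
  rw [dist_comm]
  calc dist (x N) (x (N+k)) < ε₁ + δ' := this
    _ ≤ ε₁ + ε₁ := by linarith
    _ < ε := by rw [hε₁def]; linarith
end

section
/- Let (X,d) be a metric space and T a self-mapping of X satisfying: (1) there exists a function ψ : (0,∞) → (0,∞) with ψ(t) < t for each t > 0 such that d(Tx,Ty) ≤ (1/2)·ψ(M₂(x,y)) for all x,y ∈ X with M₂(x,y) > 0; and (2) for every ε > 0 there exists δ > 0 such that for all x,y ∈ X, ε < M₂(x,y) < ε + δ implies d(Tx,Ty) ≤ ε. Let x₀ ∈ X and define the Picard sequence x_{n+1} = Tx_n. Then the sequence of distances u_n = d(x_n, x_{n+1}) is nonincreasing and converges to 0, and {x_n} is a Cauchy sequence in X. -/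
/-- The number `M₂(x,y)` associated to a self-mapping `T` of a metric space. -/
noncomputable def M2 {X : Type*} [MetricSpace X] (T : X → X) (x y : X) : ℝ :=
  max (max (max (dist x y) (dist (T x) x)) (max (dist (T y) y) (dist (T x) y)))
    (dist (T y) x)

private lemma M2_le_of {X : Type*} [MetricSpace X] (T : X → X) {x y : X} {c : ℝ}
    (h1 : dist x y ≤ c) (h2 : dist (T x) x ≤ c) (h3 : dist (T y) y ≤ c)
    (h4 : dist (T x) y ≤ c) (h5 : dist (T y) x ≤ c) : M2 T x y ≤ c :=
  max_le (max_le (max_le h1 h2) (max_le h3 h4)) h5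

private lemma dist_le_M2 {X : Type*} [MetricSpace X] (T : X → X) (x y : X) :
    dist x y ≤ M2 T x y :=
  le_max_of_le_left (le_max_of_le_left (le_max_left _ _))

private lemma distTxy_le_M2 {X : Type*} [MetricSpace X] (T : X → X) (x y : X) :
    dist (T x) y ≤ M2 T x y :=
  le_max_of_le_left (le_max_of_le_right (le_max_right _ _))

private lemma distTyy_le_M2 {X : Type*} [MetricSpace X] (T : X → X) (x y : X) :
    dist (T y) y ≤ M2 T x y :=
  le_max_of_le_left (le_max_of_le_right (le_max_left _ _))

private lemma key_step {X : Type*} [MetricSpace X] {T : X → X} {ψ : ℝ → ℝ}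
    (hψ : ∀ t > (0 : ℝ), 0 < ψ t ∧ ψ t < t)
    (h1 : ∀ x y : X, 0 < M2 T x y → dist (T x) (T y) ≤ (1 / 2) * ψ (M2 T x y))
    (a b : X) (c : ℝ) (hM : M2 T a b ≤ c) : dist (T a) (T b) ≤ (1 / 2) * c := by
  have h0 : (0 : ℝ) ≤ M2 T a b := dist_nonneg.trans (dist_le_M2 T a b)
  rcases h0.lt_or_eq with hpos | heq
  · have hd := h1 a b hpos
    have hlt := (hψ _ hpos).2
    linarith
  · have hab : dist (T a) b ≤ 0 := heq ▸ distTxy_le_M2 T a b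
    have hbb : dist (T b) b ≤ 0 := heq ▸ distTyy_le_M2 T a b
    have htri : dist (T a) (T b) ≤ dist (T a) b + dist b (T b) := dist_triangle _ _ _
    have hcomm : dist b (T b) = dist (T b) b := dist_comm _ _
    have hc : (0 : ℝ) ≤ c := heq.le.trans hM
    linarith

theorem stmt_12 {X : Type*} [MetricSpace X] (T : X → X)
    (ψ : ℝ → ℝ) (hψ : ∀ t > (0 : ℝ), 0 < ψ t ∧ ψ t < t)
    (h1 : ∀ x y : X, 0 < M2 T x y → dist (T x) (T y) ≤ (1 / 2) * ψ (M2 T x y))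
    (h2 : ∀ ε > (0 : ℝ), ∃ δ > (0 : ℝ), ∀ x y : X,
      ε < M2 T x y → M2 T x y < ε + δ → dist (T x) (T y) ≤ ε)
    (x₀ : X) :
    (∀ n : ℕ, dist (T^[n + 1] x₀) (T^[n + 2] x₀) ≤ dist (T^[n] x₀) (T^[n + 1] x₀)) ∧
    Filter.Tendsto (fun n : ℕ => dist (T^[n] x₀) (T^[n + 1] x₀)) Filter.atTop (nhds 0) ∧
    CauchySeq (fun n : ℕ => T^[n] x₀) := by
  set x : ℕ → X := fun n => T^[n] x₀ with hxdef
  have hx : ∀ n, x (n + 1) = T (x n) := fun n => Function.iterate_succ_apply' T n x₀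
  set u : ℕ → ℝ := fun n => dist (x n) (x (n + 1)) with hudef
  have hu0 : ∀ n, 0 ≤ u n := fun n => dist_nonneg
  -- monotonicity
  have hmono : ∀ n, u (n + 1) ≤ u n := by
    intro n
    have hM : M2 T (x n) (x (n + 1)) ≤ u n + u (n + 1) := by
      apply M2_le_of <;> (try simp only [← hx])
      · show u n ≤ u n + u (n + 1); have := hu0 (n + 1); linarith
      · rw [dist_comm (x (n + 1)) (x n)]
        show u n ≤ u n + u (n + 1); have := hu0 (n + 1); linarith
      · rw [dist_comm (x (n + 2)) (x (n + 1))]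
        show u (n + 1) ≤ u n + u (n + 1); have := hu0 n; linarith
      · rw [dist_self]; have := hu0 n; have := hu0 (n + 1); linarith
      · calc dist (x (n + 2)) (x n) ≤ dist (x (n + 2)) (x (n + 1)) + dist (x (n + 1)) (x n) :=
              dist_triangle _ _ _
          _ = u (n + 1) + u n := by
              rw [dist_comm (x (n + 2)) (x (n + 1)), dist_comm (x (n + 1)) (x n)]
          _ = u n + u (n + 1) := by ring
    have := key_step hψ h1 (x n) (x (n + 1)) _ hM
    rw [← hx, ← hx] at this
    have h' : u (n + 1) ≤ (1 / 2) * (u n + u (n + 1)) := this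
    linarith
  -- geometric decay over two steps
  have hgeo : ∀ n, u (n + 2) ≤ (3 / 4) * u n := by
    intro n
    have h12 : u (n + 1) ≤ u n := hmono n
    have h22 : u (n + 2) ≤ u (n + 1) := hmono (n + 1)
    have hun : 0 ≤ u n := hu0 n
    -- bound dist (x (n+1)) (x (n+3)) via the pair (x n, x (n+2))
    have hM1 : M2 T (x n) (x (n + 2)) ≤ 3 * u n := by
      apply M2_le_of <;> (try simp only [← hx])
      · calc dist (x n) (x (n + 2)) ≤ dist (x n) (x (n + 1)) + dist (x (n + 1)) (x (n + 2)) :=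
              dist_triangle _ _ _
          _ = u n + u (n + 1) := rfl
          _ ≤ 3 * u n := by linarith
      · rw [dist_comm (x (n + 1)) (x n)]; show u n ≤ 3 * u n; linarith
      · rw [dist_comm (x (n + 3)) (x (n + 2))]; show u (n + 2) ≤ 3 * u n; linarith
      · show u (n + 1) ≤ 3 * u n; linarith
      · calc dist (x (n + 3)) (x n)
            ≤ dist (x (n + 3)) (x (n + 2)) + dist (x (n + 2)) (x (n + 1))
                + dist (x (n + 1)) (x n) := dist_triangle4 _ _ _ _
          _ = u (n + 2) + u (n + 1) + u n := by
              rw [dist_comm (x (n + 3)) (x (n + 2)), dist_comm (x (n + 2)) (x (n + 1)),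
                dist_comm (x (n + 1)) (x n)]
          _ ≤ 3 * u n := by linarith
    have hv : dist (x (n + 1)) (x (n + 3)) ≤ (1 / 2) * (3 * u n) := by
      have := key_step hψ h1 (x n) (x (n + 2)) _ hM1
      rwa [← hx, ← hx] at this
    have hM2 : M2 T (x (n + 1)) (x (n + 2)) ≤ (3 / 2) * u n := by
      apply M2_le_of <;> (try simp only [← hx])
      · show u (n + 1) ≤ (3 / 2) * u n; linarith
      · rw [dist_comm (x (n + 2)) (x (n + 1))]; show u (n + 1) ≤ (3 / 2) * u n; linarith
      · rw [dist_comm (x (n + 3)) (x (n + 2))]; show u (n + 2) ≤ (3 / 2) * u n; linarith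
      · rw [dist_self]; linarith
      · rw [dist_comm (x (n + 3)) (x (n + 1))]; linarith
    have := key_step hψ h1 (x (n + 1)) (x (n + 2)) _ hM2
    rw [← hx, ← hx] at this
    have h' : u (n + 2) ≤ (1 / 2) * ((3 / 2) * u n) := this
    linarith
  have hanti : Antitone u := antitone_nat_of_succ_le hmono
  -- even-index geometric bound
  have heven : ∀ k, u (2 * k) ≤ (3 / 4) ^ k * u 0 := by
    intro k
    induction k with
    | zero => simp
    | succ k ih =>
        have : u (2 * (k + 1)) = u (2 * k + 2) := by ring_nf
        rw [this, pow_succ]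
        calc u (2 * k + 2) ≤ (3 / 4) * u (2 * k) := hgeo (2 * k)
          _ ≤ (3 / 4) * ((3 / 4) ^ k * u 0) := by nlinarith [hu0 (2 * k)]
          _ = (3 / 4) ^ k * (3 / 4) * u 0 := by ring
  -- global geometric bound with ratio 9/10
  have hbound : ∀ n, u n ≤ (10 / 9 * u 0) * (9 / 10) ^ n := by
    intro n
    have h1' : u n ≤ u (2 * (n / 2)) := hanti (by omega)
    have h2' : u (2 * (n / 2)) ≤ (3 / 4) ^ (n / 2) * u 0 := heven (n / 2)
    have h3' : ((3 : ℝ) / 4) ^ (n / 2) ≤ ((9 : ℝ) / 10) ^ (2 * (n / 2)) := by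
      rw [pow_mul]
      apply pow_le_pow_left₀ (by norm_num)
      norm_num
    have h4' : ((9 : ℝ) / 10) ^ (2 * (n / 2)) ≤ (10 / 9) * (9 / 10) ^ n := by
      have hle : n ≤ 2 * (n / 2) + 1 := by omega
      have := pow_le_pow_of_le_one (by norm_num : (0:ℝ) ≤ 9 / 10)
        (by norm_num : (9:ℝ) / 10 ≤ 1) hle
      calc ((9 : ℝ) / 10) ^ (2 * (n / 2)) = (10 / 9) * (9 / 10) ^ (2 * (n / 2) + 1) := by
            rw [pow_succ]; ring
        _ ≤ (10 / 9) * (9 / 10) ^ n := by nlinarith [pow_nonneg (by norm_num : (0:ℝ) ≤ 9/10) n]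
    have hu00 : 0 ≤ u 0 := hu0 0
    calc u n ≤ (3 / 4) ^ (n / 2) * u 0 := h1'.trans h2'
      _ ≤ (9 / 10) ^ (2 * (n / 2)) * u 0 := by nlinarith
      _ ≤ ((10 / 9) * (9 / 10) ^ n) * u 0 := by nlinarith
      _ = (10 / 9 * u 0) * (9 / 10) ^ n := by ring
  refine ⟨hmono, ?_, ?_⟩
  · have hlim : Filter.Tendsto (fun n : ℕ => (10 / 9 * u 0) * (9 / 10 : ℝ) ^ n)
        Filter.atTop (nhds 0) := by
      have := (tendsto_pow_atTop_nhds_zero_of_lt_one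
        (by norm_num : (0:ℝ) ≤ 9 / 10) (by norm_num : (9:ℝ) / 10 < 1)).const_mul (10 / 9 * u 0)
      simpa using this
    exact squeeze_zero hu0 hbound hlim
  · exact cauchySeq_of_le_geometric (9 / 10) (10 / 9 * u 0) (by norm_num) hbound
end
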